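/- The mapped Chebyshev functions are orthonormal on the real line: for all natural numbers j and k, ∫_ℝ 𝕋_j(x) · 𝕋_k(x) dx equals 1 if j = k and 0 otherwise. -/

import Mathlib

open MeasureTheory

/-- The mapped Chebyshev function `𝕋_k(x) = (c_k π/2)^{-1/2} (1+x²)^{-1/2}
T_k(x/√(1+x²))`, where `c_0 = 2` and `c_k = 1` for `k ≥ 1`. -/
noncomputable def mcf (k : ℕ) (x : ℝ) : ℝ :=
  (Real.sqrt ((if k = 0 then 2 else 1) * Real.pi / 2))⁻¹ * (Real.sqrt (1 + x ^ 2))⁻¹ *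
    (Polynomial.Chebyshev.T ℝ (k : ℤ)).eval (x / Real.sqrt (1 + x ^ 2))

open Real Set

lemma int_cos (z : ℤ) :
    ∫ φ in (0:ℝ)..Real.pi, Real.cos (z * φ) = if z = 0 then Real.pi else 0 := by
  rcases eq_or_ne z 0 with hz | hz
  · simp [hz]
  · have hz' : (z : ℝ) ≠ 0 := Int.cast_ne_zero.mpr hz
    rw [if_neg hz, intervalIntegral.integral_comp_mul_left _ hz']
    simp [Real.sin_int_mul_pi]

lemma cc (m n : ℕ) :
    ∫ φ in (0:ℝ)..Real.pi, Real.cos (m * φ) * Real.cos (n * φ) =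
      if m = n then (if m = 0 then Real.pi else Real.pi / 2) else 0 := by
  have key : ∀ φ : ℝ, Real.cos (m * φ) * Real.cos (n * φ) =
      (Real.cos (((m : ℝ) - (n : ℝ)) * φ) + Real.cos (((m : ℝ) + (n : ℝ)) * φ)) / 2 := by
    intro φ
    have := Real.two_mul_cos_mul_cos (m * φ) (n * φ)
    rw [← sub_mul, ← add_mul] at this
    linarith
  simp_rw [key]
  have i1 := int_cos ((m:ℤ) - n)
  have i2 := int_cos ((m:ℤ) + n)
  push_cast at i1 i2
  rw [intervalIntegral.integral_div, intervalIntegral.integral_add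
    (by apply Continuous.intervalIntegrable; fun_prop)
    (by apply Continuous.intervalIntegrable; fun_prop), i1, i2]
  rcases eq_or_ne m n with h | h
  · subst h
    rcases eq_or_ne m 0 with h0 | h0
    · simp [h0]
    · have hm : (m:ℤ) + m ≠ 0 := by omega
      simp [h0, hm]
  · have h1 : (m:ℤ) - n ≠ 0 := by omega
    have h2 : (m:ℤ) + n ≠ 0 := by omega
    simp [h1, h2, h]

lemma mcf_tan (n : ℕ) {θ : ℝ} (h : 0 < Real.cos θ) :
    mcf n (Real.tan θ) =
      (Real.sqrt ((if n = 0 then 2 else 1) * Real.pi / 2))⁻¹ *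
        (Real.cos θ * Real.cos (n * (Real.pi / 2 - θ))) := by
  unfold mcf
  rw [Real.inv_sqrt_one_add_tan_sq h, Real.tan_div_sqrt_one_add_tan_sq h,
    ← Real.cos_pi_div_two_sub, Polynomial.Chebyshev.T_real_cos]
  push_cast
  ring


/-- Orthonormality of the mapped Chebyshev functions on the real line. -/
theorem mcf_orthonormal (j k : ℕ) :
    ∫ x : ℝ, mcf j x * mcf k x = if j = k then 1 else 0 := by
  have pi_pos := Real.pi_pos
  set s : Set ℝ := Ioo (-(Real.pi/2)) (Real.pi/2) with hs_def
  have hderiv : ∀ θ ∈ s, HasDerivWithinAt Real.tan (1 / Real.cos θ ^ 2) s θ :=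
    fun θ hθ => (Real.hasDerivAt_tan (Real.cos_pos_of_mem_Ioo hθ).ne').hasDerivWithinAt
  have key := integral_image_eq_integral_abs_deriv_smul measurableSet_Ioo hderiv
    Real.injOn_tan (fun x => mcf j x * mcf k x)
  rw [Real.image_tan_Ioo, setIntegral_univ] at key
  rw [key]
  have hcong : Set.EqOn
      (fun θ => |1 / Real.cos θ ^ 2| • (mcf j (Real.tan θ) * mcf k (Real.tan θ)))
      (fun θ => (Real.sqrt ((if j = 0 then 2 else 1) * Real.pi / 2))⁻¹ *
        (Real.sqrt ((if k = 0 then 2 else 1) * Real.pi / 2))⁻¹ *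
        (Real.cos (j * (Real.pi / 2 - θ)) * Real.cos (k * (Real.pi / 2 - θ)))) s := by
    intro θ hθ
    have hc : 0 < Real.cos θ := Real.cos_pos_of_mem_Ioo hθ
    simp only [mcf_tan j hc, mcf_tan k hc, smul_eq_mul, abs_of_pos (by positivity :
      (0:ℝ) < 1 / Real.cos θ ^ 2)]
    set A := (Real.sqrt ((if j = 0 then 2 else 1) * Real.pi / 2))⁻¹ with hA
    set B := (Real.sqrt ((if k = 0 then 2 else 1) * Real.pi / 2))⁻¹ with hB
    field_simp
  rw [setIntegral_congr_fun measurableSet_Ioo hcong, integral_const_mul,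
    ← integral_Ioc_eq_integral_Ioo,
    ← intervalIntegral.integral_of_le (by linarith : -(Real.pi/2) ≤ Real.pi/2)]
  have comp := intervalIntegral.integral_comp_sub_left
    (fun u => Real.cos (j * u) * Real.cos (k * u)) (Real.pi / 2)
    (a := -(Real.pi/2)) (b := Real.pi/2)
  rw [comp]
  have e1 : Real.pi / 2 - Real.pi / 2 = 0 := by ring
  have e2 : Real.pi / 2 - -(Real.pi / 2) = Real.pi := by ring
  rw [e1, e2, cc]
  rcases eq_or_ne j k with h | h
  · subst h
    rw [if_pos rfl, if_pos rfl]
    have hcpos : (0:ℝ) < (if j = 0 then 2 else 1) := by split <;> norm_num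
    have hpos : (0:ℝ) < (if j = 0 then 2 else 1) * Real.pi / 2 := by
      have := mul_pos hcpos pi_pos; linarith
    have hval : (if j = 0 then Real.pi else Real.pi / 2) =
        (if j = 0 then (2:ℝ) else 1) * Real.pi / 2 := by split <;> ring
    rw [hval, ← mul_inv, Real.mul_self_sqrt hpos.le, inv_mul_cancel₀ hpos.ne']
  · rw [if_neg h, if_neg h, mul_zero]
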